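/- arXiv:1205.0947 — 5 statements merged into one kernel-verified Lean document; each statement's English description precedes it below -/
import Mathlib

section
/- For every probability measure ν on [0,∞], the mass of the atom at infinity is recovered from F_ν via the limit lim_{n→∞} ( −log F_ν(−n, 0) + log F_ν(−n, n) ) = ν({∞}), where n runs over the positive integers. -/
open MeasureTheory Filter Topology
open scoped ENNReal

/-- Standard normal density. -/
noncomputable def stdPdf (t : ℝ) : ℝ := (Real.sqrt (2 * Real.pi))⁻¹ * Real.exp (-(t ^ 2) / 2)

/-- Standard normal CDF. -/
noncomputable def stdCdf (x : ℝ) : ℝ := ∫ t in Set.Iic x, stdPdf t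

/-- The integrand `Φ(λ + (y−x)/(2λ)) e^{−x} + Φ(λ + (x−y)/(2λ)) e^{−y}` extended continuously
to `λ = 0` and `λ = ∞` (we identify `[0,∞]` with `ℝ≥0∞`). -/
noncomputable def nuKer (x y : ℝ) (l : ℝ≥0∞) : ℝ :=
  if l = 0 then Real.exp (-min x y)
  else if l = ⊤ then Real.exp (-x) + Real.exp (-y)
  else
    stdCdf (l.toReal + (y - x) / (2 * l.toReal)) * Real.exp (-x)
      + stdCdf (l.toReal + (x - y) / (2 * l.toReal)) * Real.exp (-y)

/-- The mixed bivariate Hüsler–Reiss distribution function `F_ν` associated with a (probability)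
measure `ν` on `[0,∞]`. -/
noncomputable def Fnu (ν : Measure ℝ≥0∞) (x y : ℝ) : ℝ :=
  Real.exp (-∫ l, nuKer x y l ∂ν)

/-- Weak convergence of measures: convergence of integrals of bounded continuous functions. -/
def WeakTendsto {α : Type*} [TopologicalSpace α] [MeasurableSpace α]
    (μ : ℕ → Measure α) (ν : Measure α) : Prop :=
  ∀ f : BoundedContinuousFunction α ℝ,
    Tendsto (fun n => ∫ a, f a ∂(μ n)) atTop (𝓝 (∫ a, f a ∂ν))

/-!
For `λ ∈ (0, ∞)` the difference of the two kernels `nuKer (-s) 0 λ - nuKer (-s) s λ` is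
`(Φ(λ + s/2λ) - Φ(λ + s/λ)) eˢ + Φ(λ - s/2λ) - Φ(λ - s/λ) e⁻ˢ`. The Gaussian tail bound
`1 - Φ(a) ≤ exp(-a²/2)` turns the first term into at most `exp(-(s/2λ - λ)²/2)`, so all three
terms vanish as `s → ∞`; at `λ = 0` the difference is `0` and at `λ = ∞` it is `1 - e⁻ˢ → 1`.
The differences are bounded by `2`, and dominated convergence yields `ν({∞})`.
-/

open Set Real ProbabilityTheory

theorem stdCdf_eq_cdf (x : ℝ) : stdCdf x = cdf (gaussianReal 0 1) x := by
  rw [cdf_eq_real, Measure.real, gaussianReal_apply_eq_integral _ one_ne_zero,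
    ENNReal.toReal_ofReal (setIntegral_nonneg measurableSet_Iic fun t _ ↦
      gaussianPDFReal_nonneg _ _ t)]
  simp [stdCdf, gaussianPDFReal, stdPdf]

lemma stdCdf_nonneg (x : ℝ) : 0 ≤ stdCdf x := stdCdf_eq_cdf x ▸ cdf_nonneg _ x

lemma stdCdf_le_one (x : ℝ) : stdCdf x ≤ 1 := stdCdf_eq_cdf x ▸ cdf_le_one _ x

lemma monotone_stdCdf : Monotone stdCdf := by
  simpa only [funext stdCdf_eq_cdf] using monotone_cdf (gaussianReal 0 1)

lemma tendsto_stdCdf_atBot : Tendsto stdCdf atBot (𝓝 0) := by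
  simpa only [funext stdCdf_eq_cdf] using tendsto_cdf_atBot (gaussianReal 0 1)

/-- Chernoff's bound, with the standard Gaussian moment generating function `exp (a ^ 2 / 2)`. -/
theorem one_sub_stdCdf_le {a : ℝ} (ha : 0 ≤ a) : 1 - stdCdf a ≤ exp (-(a ^ 2 / 2)) := by
  have h := measure_ge_le_exp_mul_mgf (μ := gaussianReal 0 1) (X := id) a ha
    (integrable_exp_mul_gaussianReal a)
  rw [mgf_id_gaussianReal] at h
  rw [stdCdf_eq_cdf, cdf_eq_real, ← probReal_compl_eq_one_sub measurableSet_Iic, compl_Iic]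
  calc (gaussianReal 0 1).real (Ioi a) ≤ (gaussianReal 0 1).real {x | a ≤ id x} :=
        measureReal_mono fun x hx ↦ le_of_lt (mem_Ioi.1 hx)
    _ ≤ _ := h
    _ = exp (-(a ^ 2 / 2)) := by rw [← exp_add]; push_cast; ring_nf

lemma nuKer_nonneg (x y : ℝ) (l : ℝ≥0∞) : 0 ≤ nuKer x y l := by
  unfold nuKer
  split_ifs
  · positivity
  · positivity
  · have := stdCdf_nonneg (l.toReal + (y - x) / (2 * l.toReal))
    have := stdCdf_nonneg (l.toReal + (x - y) / (2 * l.toReal))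
    positivity

lemma nuKer_le (x y : ℝ) (l : ℝ≥0∞) : nuKer x y l ≤ exp (-x) + exp (-y) := by
  unfold nuKer
  split_ifs
  · rcases min_choice x y with h | h <;> rw [h] <;> linarith [exp_pos (-x), exp_pos (-y)]
  · exact le_rfl
  · gcongr <;> exact mul_le_of_le_one_left (exp_nonneg _) (stdCdf_le_one _)

lemma measurable_nuKer (x y : ℝ) : Measurable (nuKer x y) := by
  have hΦ (c : ℝ) : Measurable fun l : ℝ≥0∞ ↦ stdCdf (l.toReal + c / (2 * l.toReal)) :=
    monotone_stdCdf.measurable.comp (ENNReal.measurable_toReal.add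
      (measurable_const.div (ENNReal.measurable_toReal.const_mul 2)))
  exact Measurable.ite (measurableSet_singleton 0) measurable_const <|
    Measurable.ite (measurableSet_singleton ⊤) measurable_const <|
      ((hΦ _).mul_const _).add ((hΦ _).mul_const _)

lemma integrable_nuKer (ν : Measure ℝ≥0∞) [IsFiniteMeasure ν] (x y : ℝ) :
    Integrable (nuKer x y) ν :=
  Integrable.of_bound (measurable_nuKer x y).aestronglyMeasurable (exp (-x) + exp (-y))
    (ae_of_all _ fun l ↦ by
      rw [norm_of_nonneg (nuKer_nonneg x y l)]; exact nuKer_le x y l)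

noncomputable def nuKerDiff (s : ℝ) (l : ℝ≥0∞) : ℝ := nuKer (-s) 0 l - nuKer (-s) s l

lemma nuKerDiff_zero {s : ℝ} (hs : 0 ≤ s) : nuKerDiff s 0 = 0 := by
  simp [nuKerDiff, nuKer, min_eq_left (neg_nonpos.2 hs), min_eq_left (neg_le_self hs)]

lemma nuKerDiff_top (s : ℝ) : nuKerDiff s ⊤ = 1 - exp (-s) := by
  simp [nuKerDiff, nuKer]

lemma nuKerDiff_of_ne (s : ℝ) {l : ℝ≥0∞} (h0 : l ≠ 0) (htop : l ≠ ⊤) :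
    nuKerDiff s l =
      (stdCdf (l.toReal + s / (2 * l.toReal)) - stdCdf (l.toReal + s / l.toReal)) * exp s
        + stdCdf (l.toReal - s / (2 * l.toReal)) - stdCdf (l.toReal - s / l.toReal) * exp (-s) := by
  have ht : l.toReal ≠ 0 := (ENNReal.toReal_pos h0 htop).ne'
  simp only [nuKerDiff, nuKer, if_neg h0, if_neg htop]
  rw [show (s - -s) / (2 * l.toReal) = s / l.toReal by field_simp; ring,
    show (-s - s) / (2 * l.toReal) = -(s / l.toReal) by field_simp; ring,
    sub_neg_eq_add, zero_add, sub_zero, neg_div, neg_neg, neg_zero, exp_zero, mul_one,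
    ← sub_eq_add_neg, ← sub_eq_add_neg]
  ring

section FiniteScale

variable {t : ℝ}

lemma one_sub_stdCdf_mul_exp_le (ht : 0 < t) {s : ℝ} (hs : 0 ≤ s) :
    (1 - stdCdf (t + s / (2 * t))) * exp s ≤ exp (-((s / (2 * t) - t) ^ 2 / 2)) := by
  calc (1 - stdCdf (t + s / (2 * t))) * exp s ≤ exp (-((t + s / (2 * t)) ^ 2 / 2)) * exp s := by
        gcongr; exact one_sub_stdCdf_le (by positivity)
    _ = exp (-((s / (2 * t) - t) ^ 2 / 2)) := by
        rw [← exp_add]; congr 1; field_simp; ring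

lemma abs_stdCdf_sub_mul_exp_le (ht : 0 < t) {s : ℝ} (hs : 0 ≤ s) :
    |(stdCdf (t + s / (2 * t)) - stdCdf (t + s / t)) * exp s|
      ≤ exp (-((s / (2 * t) - t) ^ 2 / 2)) := by
  have hmono : stdCdf (t + s / (2 * t)) ≤ stdCdf (t + s / t) :=
    monotone_stdCdf (by gcongr; linarith)
  rw [abs_of_nonpos (mul_nonpos_of_nonpos_of_nonneg (by linarith) (exp_nonneg s))]
  refine le_trans ?_ (one_sub_stdCdf_mul_exp_le ht hs)
  rw [← neg_mul]
  gcongr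
  linarith [stdCdf_le_one (t + s / t)]

lemma tendsto_stdCdf_sub_mul_exp (ht : 0 < t) :
    Tendsto (fun s ↦ (stdCdf (t + s / (2 * t)) - stdCdf (t + s / t)) * exp s) atTop (𝓝 0) := by
  have hlim : Tendsto (fun s ↦ s / (2 * t) - t) atTop atTop :=
    tendsto_atTop_add_const_right _ _ (tendsto_id.atTop_div_const (by positivity))
  have hbound : Tendsto (fun s ↦ exp (-((s / (2 * t) - t) ^ 2 / 2))) atTop (𝓝 0) :=
    tendsto_exp_atBot.comp <| tendsto_neg_atTop_atBot.comp <|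
      ((tendsto_pow_atTop two_ne_zero).comp hlim).atTop_div_const two_pos
  refine squeeze_zero_norm' ?_ hbound
  filter_upwards [eventually_ge_atTop 0] with s hs
  exact abs_stdCdf_sub_mul_exp_le ht hs

end FiniteScale

lemma abs_nuKerDiff_le {s : ℝ} (hs : 0 ≤ s) (l : ℝ≥0∞) : |nuKerDiff s l| ≤ 2 := by
  have hexp : exp (-s) ≤ 1 := exp_le_one_iff.2 (neg_nonpos.2 hs)
  rcases eq_or_ne l 0 with rfl | h0
  · simp [nuKerDiff_zero hs]
  rcases eq_or_ne l ⊤ with rfl | htop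
  · rw [nuKerDiff_top, abs_le]; constructor <;> linarith [exp_pos (-s)]
  set t := l.toReal
  have hA := abs_stdCdf_sub_mul_exp_le (ENNReal.toReal_pos h0 htop) hs
  have hA1 : exp (-((s / (2 * t) - t) ^ 2 / 2)) ≤ 1 :=
    exp_le_one_iff.2 (neg_nonpos.2 (by positivity))
  have hC : stdCdf (t - s / t) * exp (-s) ≤ 1 :=
    mul_le_one₀ (stdCdf_le_one _) (exp_nonneg _) hexp
  rw [nuKerDiff_of_ne s h0 htop]
  rw [abs_le] at hA ⊢
  constructor <;> linarith [stdCdf_nonneg (t - s / (2 * t)), stdCdf_le_one (t - s / (2 * t)),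
    mul_nonneg (stdCdf_nonneg (t - s / t)) (exp_nonneg (-s))]

lemma tendsto_nuKerDiff (l : ℝ≥0∞) :
    Tendsto (fun s ↦ nuKerDiff s l) atTop (𝓝 (({⊤} : Set ℝ≥0∞).indicator 1 l)) := by
  rcases eq_or_ne l 0 with rfl | h0
  · rw [indicator_of_notMem (by simp)]
    exact tendsto_const_nhds.congr' <|
      (eventually_ge_atTop 0).mono fun s hs ↦ (nuKerDiff_zero hs).symm
  rcases eq_or_ne l ⊤ with rfl | htop
  · simp only [nuKerDiff_top, indicator_of_mem (mem_singleton ⊤), Pi.one_apply]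
    simpa using tendsto_const_nhds.sub tendsto_exp_neg_atTop_nhds_zero
  have ht := ENNReal.toReal_pos h0 htop
  have hB : Tendsto (fun s ↦ stdCdf (l.toReal - s / (2 * l.toReal))) atTop (𝓝 0) :=
    tendsto_stdCdf_atBot.comp <| tendsto_atBot_add_const_left _ _ <|
      tendsto_neg_atTop_atBot.comp (tendsto_id.atTop_div_const (by positivity))
  have hC : Tendsto (fun s ↦ stdCdf (l.toReal - s / l.toReal) * exp (-s)) atTop (𝓝 0) :=
    squeeze_zero (fun s ↦ mul_nonneg (stdCdf_nonneg _) (exp_nonneg _))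
      (fun s ↦ mul_le_of_le_one_left (exp_nonneg _) (stdCdf_le_one _))
      tendsto_exp_neg_atTop_nhds_zero
  simp only [nuKerDiff_of_ne _ h0 htop, indicator_of_notMem (mem_singleton_iff.not.2 htop)]
  simpa using ((tendsto_stdCdf_sub_mul_exp ht).add hB).sub hC

lemma neg_log_Fnu_add_log_Fnu (ν : Measure ℝ≥0∞) [IsFiniteMeasure ν] (s : ℝ) :
    -log (Fnu ν (-s) 0) + log (Fnu ν (-s) s) = ∫ l, nuKerDiff s l ∂ν := by
  unfold nuKerDiff
  rw [Fnu, Fnu, log_exp, log_exp, integral_sub (integrable_nuKer ν _ _) (integrable_nuKer ν _ _)]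
  ring

theorem tendsto_integral_nuKerDiff (ν : Measure ℝ≥0∞) [IsFiniteMeasure ν] :
    Tendsto (fun s ↦ ∫ l, nuKerDiff s l ∂ν) atTop (𝓝 (ν.real {⊤})) := by
  rw [← integral_indicator_one (measurableSet_singleton ⊤)]
  refine tendsto_integral_filter_of_dominated_convergence (fun _ ↦ 2)
    (Eventually.of_forall fun s ↦ ((measurable_nuKer _ _).sub
      (measurable_nuKer _ _)).aestronglyMeasurable) ?_ (integrable_const 2)
    (ae_of_all _ tendsto_nuKerDiff)
  filter_upwards [eventually_ge_atTop 0] with s hs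
  exact ae_of_all _ fun l ↦ abs_nuKerDiff_le hs l

/-- The atom of `ν` at `∞` is recovered from `F_ν`:
`lim_{n→∞} (−log F_ν(−n,0) + log F_ν(−n,n)) = ν({∞})`. -/
theorem stmt5 (ν : Measure ℝ≥0∞) (hν : IsProbabilityMeasure ν) :
    Tendsto (fun n : ℕ =>
        -Real.log (Fnu ν (-(n : ℝ)) 0) + Real.log (Fnu ν (-(n : ℝ)) (n : ℝ)))
      atTop (𝓝 ((ν {⊤}).toReal)) := by
  simp only [neg_log_Fnu_add_log_Fnu]
  exact (tendsto_integral_nuKerDiff ν).comp tendsto_natCast_atTop_atTop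
end

section
/- Let ν be a probability measure on [0,∞], let (R_i)_{i∈ℕ} be i.i.d. random variables with distribution ν, and let (b_n)_{n≥2} be any sequence of positive reals with lim_{n→∞} b_n/√(2 log n) = 1. Then almost surely the random probability measures ν_n = (1/n) Σ_{i=1}^n δ_{R_i · b_n/b_i} on [0,∞] converge weakly to ν as n → ∞ (with the convention ∞·c = ∞ for c > 0). -/
/-!
Almost surely, the unscaled empirical measures `n⁻¹ ∑ δ_{R_i}` converge weakly to `ν`: the strong
law of large numbers gives convergence of `∫ g` for every `g` in a countable dense subset of the
separable space `C([0,∞])`, and this extends to all `g` because `g ↦ ∫ g dμ` is `1`-Lipschitz for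
every sub-probability measure `μ`.

The rescaling does not change the limit. For `η n ≤ i ≤ n` we have `log n - log i ≤ log (1/η)`, so
`log n / log i → 1` and hence `b_n / b_i → 1` uniformly on that range. By compactness of `[0,∞]`,
`f (x c) → f x` uniformly in `x` as `c → 1`, so the rescaled average differs from the unscaled one
by at most `ε + 2‖f‖η`, the second term coming from the indices `i < η n`.
-/

open MeasureTheory Filter Topology Uniformity ProbabilityTheory BoundedContinuousFunction
open scoped ENNReal

def nearDiagonal (η : ℝ) : Filter (ℕ × ℕ) :=
  comap Prod.fst atTop ⊓ 𝓟 {p | η * p.1 ≤ p.2 ∧ p.2 ≤ p.1}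

lemma tendsto_fst_nearDiagonal (η : ℝ) : Tendsto Prod.fst (nearDiagonal η) atTop :=
  tendsto_comap.mono_left inf_le_left

lemma eventually_mem_nearDiagonal (η : ℝ) :
    ∀ᶠ p : ℕ × ℕ in nearDiagonal η, η * p.1 ≤ p.2 ∧ p.2 ≤ p.1 :=
  mem_inf_of_right (mem_principal_self _)

lemma tendsto_snd_nearDiagonal {η : ℝ} (hη : 0 < η) : Tendsto Prod.snd (nearDiagonal η) atTop := by
  refine tendsto_natCast_atTop_iff.1 (tendsto_atTop_mono' _ ?_
    (((tendsto_natCast_atTop_atTop (R := ℝ)).comp (tendsto_fst_nearDiagonal η)).const_mul_atTop hη))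
  filter_upwards [eventually_mem_nearDiagonal η] with p hp using hp.1

lemma eventually_atTop_of_eventually_nearDiagonal {η : ℝ} {P : ℕ → ℕ → Prop}
    (h : ∀ᶠ p in nearDiagonal η, P p.1 p.2) :
    ∀ᶠ n : ℕ in atTop, ∀ i : ℕ, η * n ≤ i → i ≤ n → P n i := by
  have := eventually_comap.1 (eventually_inf_principal.1 h)
  filter_upwards [this] with n hn i hi hin using hn (n, i) rfl ⟨hi, by exact_mod_cast hin⟩

lemma tendsto_log_div_log_nearDiagonal {η : ℝ} (hη : 0 < η) :
    Tendsto (fun p : ℕ × ℕ => Real.log p.1 / Real.log p.2) (nearDiagonal η) (𝓝 1) := by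
  have hlog : Tendsto (fun p : ℕ × ℕ => Real.log p.2) (nearDiagonal η) atTop :=
    Real.tendsto_log_atTop.comp (tendsto_natCast_atTop_atTop.comp (tendsto_snd_nearDiagonal hη))
  have hbounds : ∀ᶠ p : ℕ × ℕ in nearDiagonal η, 0 < Real.log p.2 ∧
      Real.log p.2 ≤ Real.log p.1 ∧ Real.log p.1 ≤ Real.log p.2 - Real.log η := by
    filter_upwards [eventually_mem_nearDiagonal η, hlog.eventually_gt_atTop 0]
      with ⟨n, i⟩ ⟨hin, hni⟩ hlogi
    have hi : (0 : ℝ) < i := Nat.cast_pos.2 (Nat.pos_of_ne_zero (by rintro rfl; simp at hlogi))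
    have hni : (i : ℝ) ≤ n := Nat.cast_le.2 hni
    refine ⟨hlogi, Real.log_le_log hi hni, ?_⟩
    have := Real.log_le_log (mul_pos hη (hi.trans_le hni)) hin
    rw [Real.log_mul hη.ne' (hi.trans_le hni).ne'] at this
    linarith
  have hupper : Tendsto (fun p : ℕ × ℕ => 1 + (-Real.log η) * (Real.log p.2)⁻¹)
      (nearDiagonal η) (𝓝 1) := by
    simpa using (hlog.inv_tendsto_atTop.const_mul (-Real.log η)).const_add 1
  refine tendsto_of_tendsto_of_tendsto_of_le_of_le' tendsto_const_nhds hupper ?_ ?_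
  · filter_upwards [hbounds] with p ⟨hpos, hle, _⟩
    rwa [one_le_div hpos]
  · filter_upwards [hbounds] with p ⟨hpos, _, hle⟩
    rw [div_le_iff₀ hpos, add_mul, inv_mul_cancel_right₀ hpos.ne']
    linarith

lemma tendsto_div_nearDiagonal {b : ℕ → ℝ} (hbpos : ∀ n : ℕ, 1 ≤ n → 0 < b n)
    (hblim : Tendsto (fun n : ℕ => b n / Real.sqrt (2 * Real.log n)) atTop (𝓝 1))
    {η : ℝ} (hη : 0 < η) :
    Tendsto (fun p : ℕ × ℕ => b p.1 / b p.2) (nearDiagonal η) (𝓝 1) := by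
  set s : ℕ → ℝ := fun n => Real.sqrt (2 * Real.log n)
  have hs : Tendsto (fun p : ℕ × ℕ => s p.1 / s p.2) (nearDiagonal η) (𝓝 1) := by
    have := (tendsto_log_div_log_nearDiagonal hη).sqrt
    rw [Real.sqrt_one] at this
    refine this.congr fun p => ?_
    rw [← mul_div_mul_left _ _ two_ne_zero, Real.sqrt_div (by positivity)]
  have hlim : Tendsto (fun p : ℕ × ℕ => (b p.1 / s p.1) / (b p.2 / s p.2) * (s p.1 / s p.2))
      (nearDiagonal η) (𝓝 1) := by
    have := ((hblim.comp (tendsto_fst_nearDiagonal η)).div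
      (hblim.comp (tendsto_snd_nearDiagonal hη)) one_ne_zero).mul hs
    rwa [div_one, one_mul] at this
  refine hlim.congr' ?_
  filter_upwards [(tendsto_snd_nearDiagonal hη).eventually_ge_atTop 2,
    eventually_mem_nearDiagonal η] with ⟨n, i⟩ (hi : 2 ≤ i) ⟨_, (hni : i ≤ n)⟩
  have hs_pos : ∀ m : ℕ, 2 ≤ m → 0 < s m := fun m hm =>
    Real.sqrt_pos.2 (mul_pos two_pos (Real.log_pos (by exact_mod_cast hm)))
  have := hs_pos i hi
  have := hs_pos n (hi.trans hni)
  have := hbpos i (by omega)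
  field_simp

lemma abs_sum_Icc_le_of_abs_le_of_abs_lt {a : ℕ → ℝ} {M ε η : ℝ} (hM : ∀ i, |a i| ≤ M)
    (hε : 0 < ε) (hη : 0 ≤ η) (n : ℕ) (ha : ∀ i : ℕ, η * n ≤ i → i ≤ n → |a i| < ε) :
    |∑ i ∈ Finset.Icc 1 n, a i| ≤ n * ε + η * n * M := by
  have hM0 : 0 ≤ M := (abs_nonneg _).trans (hM 0)
  set m := ⌊η * n⌋₊
  have hterm : ∀ i ∈ Finset.Icc 1 n, |a i| ≤ ε + if i ∈ Finset.Icc 1 m then M else 0 := by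
    intro i hi
    rw [Finset.mem_Icc] at hi
    by_cases him : i ≤ m
    · simp only [Finset.mem_Icc, hi.1, him, and_self, if_true]
      linarith [hM i]
    · have := ha i (Nat.lt_of_floor_lt (not_le.1 him)).le hi.2
      split_ifs <;> linarith
  calc |∑ i ∈ Finset.Icc 1 n, a i|
      ≤ ∑ i ∈ Finset.Icc 1 n, (ε + if i ∈ Finset.Icc 1 m then M else 0) :=
        (Finset.abs_sum_le_sum_abs _ _).trans (Finset.sum_le_sum hterm)
    _ = n * ε + ∑ i ∈ Finset.Icc 1 n ∩ Finset.Icc 1 m, M := by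
        rw [Finset.sum_add_distrib, Finset.sum_ite_mem]
        simp
    _ ≤ n * ε + ∑ i ∈ Finset.Icc 1 m, M := by
        gcongr
        exact Finset.inter_subset_right
    _ ≤ n * ε + η * n * M := by
        have := Nat.floor_le (mul_nonneg hη n.cast_nonneg)
        simp only [Finset.sum_const, Nat.card_Icc, add_tsub_cancel_right, nsmul_eq_mul]
        gcongr

lemma tendsto_average_of_tendsto_nearDiagonal {a : ℕ → ℕ → ℝ} {M : ℝ} (hM : ∀ n i, |a n i| ≤ M)
    (ha : ∀ η > 0, Tendsto (fun p : ℕ × ℕ => a p.1 p.2) (nearDiagonal η) (𝓝 0)) :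
    Tendsto (fun n : ℕ => (n : ℝ)⁻¹ * ∑ i ∈ Finset.Icc 1 n, a n i) atTop (𝓝 0) := by
  have hM0 : 0 ≤ M := (abs_nonneg _).trans (hM 0 0)
  rw [Metric.tendsto_nhds]
  intro r hr
  set η := r / (2 * (M + 1))
  have hη : 0 < η := by positivity
  have hsmall := eventually_atTop_of_eventually_nearDiagonal (P := fun n i => |a n i| < r / 2)
    (by simpa using (ha η hη).eventually (Metric.ball_mem_nhds 0 (half_pos hr)))
  filter_upwards [hsmall, eventually_gt_atTop 0] with n hn hn0
  have hn_pos : (0 : ℝ) < n := Nat.cast_pos.2 hn0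
  have hsum := abs_sum_Icc_le_of_abs_le_of_abs_lt (hM n) (half_pos hr) hη.le n hn
  rw [Real.dist_eq, sub_zero, abs_mul, abs_inv, Nat.abs_cast, inv_mul_lt_iff₀ hn_pos]
  have hηM : η * M < r / 2 := by
    rw [div_mul_eq_mul_div, div_lt_iff₀ (by positivity)]
    nlinarith
  calc |∑ i ∈ Finset.Icc 1 n, a n i| ≤ n * (r / 2) + η * n * M := hsum
    _ = n * (r / 2 + η * M) := by ring
    _ < n * r := by gcongr; linarith

lemma tendstoUniformly_comp_mul_ofReal {α : Type*} [UniformSpace α] {f : ℝ≥0∞ → α}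
    (hf : Continuous f) :
    TendstoUniformly (fun (c : ℝ) (x : ℝ≥0∞) => f (x * ENNReal.ofReal c)) f (𝓝 1) := by
  have hmul (p : ℝ × ℝ≥0∞) (hp : 0 < p.1) :
      ContinuousAt (fun p : ℝ × ℝ≥0∞ => p.2 * ENNReal.ofReal p.1) p :=
    ENNReal.Tendsto.mul continuous_snd.continuousAt (Or.inr ENNReal.ofReal_ne_top)
      (ENNReal.continuous_ofReal.comp continuous_fst).continuousAt
      (Or.inl (ENNReal.ofReal_pos.2 hp).ne')
  have hcont : ContinuousOn (fun p : ℝ × ℝ≥0∞ => f (p.2 * ENNReal.ofReal p.1))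
      (Set.Ioi 0 ×ˢ Set.univ) :=
    continuousOn_of_forall_continuousAt fun p hp => hf.continuousAt.comp (hmul p hp.1)
  intro u hu
  obtain ⟨v, hv, hvu⟩ := isCompact_univ.mem_uniformity_of_prod
    (f := fun (c : ℝ) (x : ℝ≥0∞) => f (x * ENNReal.ofReal c)) hcont
    (Set.mem_Ioi.2 one_pos) (symm_le_uniformity hu)
  rw [nhdsWithin_eq_nhds.2 (Ioi_mem_nhds one_pos)] at hv
  filter_upwards [hv] with c hc x
  simpa using hvu c hc x trivial

lemma tendsto_average_comp_mul_ofReal_sub (f : ℝ≥0∞ →ᵇ ℝ) (x : ℕ → ℝ≥0∞) {c : ℕ → ℕ → ℝ}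
    (hc : ∀ η > 0, Tendsto (fun p : ℕ × ℕ => c p.1 p.2) (nearDiagonal η) (𝓝 1)) :
    Tendsto (fun n : ℕ => (n : ℝ)⁻¹ *
      ∑ i ∈ Finset.Icc 1 n, (f (x i * ENNReal.ofReal (c n i)) - f (x i))) atTop (𝓝 0) := by
  refine tendsto_average_of_tendsto_nearDiagonal (M := 2 * ‖f‖)
    (fun n i => by simpa [Real.dist_eq] using f.dist_le_two_norm _ _) fun η hη => ?_
  rw [Metric.tendsto_nhds]
  intro ε hε
  filter_upwards [(hc η hη).eventually
    (Metric.tendstoUniformly_iff.1 (tendstoUniformly_comp_mul_ofReal f.continuous) ε hε)]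
    with p hp
  simpa [Real.dist_eq, abs_sub_comm] using hp (x p.2)

-- For `n = 0` this is `∞ • 0 = 0`.
noncomputable def empiricalMeasure {X : Type*} [MeasurableSpace X] (y : ℕ → X) (n : ℕ) : Measure X :=
  (n : ℝ≥0∞)⁻¹ • ∑ i ∈ Finset.Icc 1 n, Measure.dirac (y i)

section empiricalMeasure

variable {X : Type*} [MeasurableSpace X] (y : ℕ → X) (n : ℕ)

lemma empiricalMeasure_univ_le_one : empiricalMeasure y n Set.univ ≤ 1 := by
  simp [empiricalMeasure]

lemma integral_empiricalMeasure [MeasurableSingletonClass X] (f : X → ℝ) :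
    ∫ x, f x ∂empiricalMeasure y n = (n : ℝ)⁻¹ * ∑ i ∈ Finset.Icc 1 n, f (y i) := by
  rw [empiricalMeasure, integral_smul_measure,
    integral_finsetSum_measure fun i _ => integrable_dirac enorm_lt_top]
  simp [integral_dirac, ENNReal.toReal_inv]

end empiricalMeasure

section DenseExtension

variable {X : Type*} [TopologicalSpace X] [MeasurableSpace X] [OpensMeasurableSpace X]

lemma lipschitzWith_integral (μ : Measure X) [IsFiniteMeasure μ] :
    LipschitzWith (μ Set.univ).toNNReal (fun f : X →ᵇ ℝ => ∫ x, f x ∂μ) := by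
  refine LipschitzWith.of_dist_le_mul fun f g => ?_
  rw [dist_eq_norm, ← integral_sub (f.integrable μ) (g.integrable μ), dist_eq_norm]
  exact (f - g).norm_integral_le_mul_norm μ

lemma tendsto_integral_of_dense {ι : Type*} {l : Filter ι} {μ : ι → Measure X}
    (hμ : ∀ i, μ i Set.univ ≤ 1) (ν : Measure X) [IsFiniteMeasure ν] {D : Set (X →ᵇ ℝ)}
    (hD : Dense D) (h : ∀ g ∈ D, Tendsto (fun i => ∫ x, g x ∂μ i) l (𝓝 (∫ x, g x ∂ν)))
    (f : X →ᵇ ℝ) :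
    Tendsto (fun i => ∫ x, f x ∂μ i) l (𝓝 (∫ x, f x ∂ν)) := by
  have hfin (i : ι) : IsFiniteMeasure (μ i) := ⟨(hμ i).trans_lt ENNReal.one_lt_top⟩
  have hequi : Equicontinuous fun i (g : X →ᵇ ℝ) => ∫ x, g x ∂μ i :=
    (LipschitzWith.uniformEquicontinuous _ 1 fun i =>
      (lipschitzWith_integral (μ i)).weaken
        (by simpa using ENNReal.toNNReal_mono ENNReal.one_ne_top (hμ i))).equicontinuous
  have hclosed := hequi.isClosed_setOfPred_tendsto (l := l) (lipschitzWith_integral ν).continuous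
  exact hclosed.closure_subset_iff.2 h (hD f)

end DenseExtension

lemma ae_tendsto_integral_empiricalMeasure {Ω X : Type*} [MeasurableSpace Ω] [MeasurableSpace X]
    [MeasurableSingletonClass X] (P : Measure Ω) (ν : Measure X)
    (Y : ℕ → Ω → X) (hY : ∀ i, Measurable (Y i)) (hindep : iIndepFun Y P)
    (hdist : ∀ i, P.map (Y i) = ν) {g : X → ℝ} (hg : Measurable g) (hgν : Integrable g ν) :
    ∀ᵐ ω ∂P, Tendsto (fun n : ℕ => ∫ x, g x ∂empiricalMeasure (Y · ω) n) atTop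
      (𝓝 (∫ x, g x ∂ν)) := by
  set Z : ℕ → Ω → ℝ := fun i ω => g (Y (i + 1) ω)
  have hint : Integrable (Z 0) P := by
    rw [← hdist 1] at hgν
    exact (integrable_map_measure hgν.aestronglyMeasurable (hY 1).aemeasurable).1 hgν
  have hpair : Pairwise fun i j => IndepFun (Z i) (Z j) P := fun i j hij =>
    (hindep.indepFun (by omega : i + 1 ≠ j + 1)).comp hg hg
  have hident (i : ℕ) : IdentDistrib (Z i) (Z 0) P P :=
    (IdentDistrib.mk (hY _).aemeasurable (hY _).aemeasurable (by rw [hdist, hdist])).comp hg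
  have hmean : ∫ ω, Z 0 ω ∂P = ∫ x, g x ∂ν := by
    rw [← hdist 1, integral_map (hY 1).aemeasurable hg.aestronglyMeasurable]
  filter_upwards [strong_law_ae Z hint hpair hident] with ω hω
  rw [hmean] at hω
  refine hω.congr fun n => ?_
  rw [integral_empiricalMeasure, smul_eq_mul, Finset.range_eq_Ico,
    Finset.sum_Ico_add' (fun i => g (Y i ω)), zero_add, Finset.Ico_add_one_right_eq_Icc]

instance BoundedContinuousFunction.instSeparableSpaceOfCompactSpace {X Y : Type*}
    [TopologicalSpace X] [CompactSpace X] [LocallyCompactSpace X] [SecondCountableTopology X]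
    [PseudoMetricSpace Y] [SecondCountableTopology Y] :
    TopologicalSpace.SeparableSpace (X →ᵇ Y) :=
  (ContinuousMap.equivBoundedOfCompact X Y).surjective.denseRange.separableSpace
    (ContinuousMap.isUniformInducing_equivBoundedOfCompact X Y).uniformContinuous.continuous

theorem stmt7_general {Ω : Type*} [MeasurableSpace Ω] (P : Measure Ω)
    (ν : Measure ℝ≥0∞) [IsProbabilityMeasure ν]
    (R : ℕ → Ω → ℝ≥0∞) (hRmeas : ∀ i, Measurable (R i))
    (hindep : ProbabilityTheory.iIndepFun R P)
    (hdist : ∀ i, Measure.map (R i) P = ν)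
    (b : ℕ → ℝ) (hbpos : ∀ n : ℕ, 1 ≤ n → 0 < b n)
    (hblim : Tendsto (fun n : ℕ => b n / Real.sqrt (2 * Real.log n)) atTop (𝓝 1)) :
    ∀ᵐ ω ∂P, ∀ f : BoundedContinuousFunction ℝ≥0∞ ℝ,
      Tendsto (fun n : ℕ => ∫ l, f l ∂((n : ℝ≥0∞)⁻¹ • ∑ i ∈ Finset.Icc 1 n,
          Measure.dirac (R i ω * ENNReal.ofReal (b n / b i))))
        atTop (𝓝 (∫ l, f l ∂ν)) := by
  obtain ⟨D, hD_countable, hD_dense⟩ := TopologicalSpace.exists_countable_dense (ℝ≥0∞ →ᵇ ℝ)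
  have hae : ∀ᵐ ω ∂P, ∀ g ∈ D, Tendsto (fun n : ℕ => ∫ x, g x ∂empiricalMeasure (R · ω) n)
      atTop (𝓝 (∫ x, g x ∂ν)) :=
    (ae_ball_iff hD_countable).2 fun g _ => ae_tendsto_integral_empiricalMeasure P ν R hRmeas
      hindep hdist g.continuous.measurable (g.integrable ν)
  filter_upwards [hae] with ω hω f
  have hunscaled := tendsto_integral_of_dense (fun n => empiricalMeasure_univ_le_one _ n) ν
    hD_dense hω f
  have hscaling := tendsto_average_comp_mul_ofReal_sub f (R · ω) (c := fun n i => b n / b i)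
    fun η hη => tendsto_div_nearDiagonal hbpos hblim hη
  change Tendsto (fun n : ℕ => ∫ l, f l
    ∂empiricalMeasure (fun i => R i ω * ENNReal.ofReal (b n / b i)) n) atTop _
  simp only [integral_empiricalMeasure] at hunscaled ⊢
  simpa [mul_sub] using hscaling.add hunscaled

/-- **Almost sure weak convergence of the rescaled empirical measures** (cf. Remark 1 /
proof of Corollary 1 of Engelke–Kabluchko–Schlather): if `(R_i)` are i.i.d. with law `ν` on
`[0,∞]` and `b_n/√(2 log n) → 1` with `b_n > 0`, then almost surely
`ν_n = (1/n) Σ_{i=1}^n δ_{R_i b_n / b_i}` converges weakly to `ν`. -/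
theorem stmt7 {Ω : Type*} [MeasurableSpace Ω] (P : Measure Ω) [IsProbabilityMeasure P]
    (ν : Measure ℝ≥0∞) [IsProbabilityMeasure ν]
    (R : ℕ → Ω → ℝ≥0∞) (hRmeas : ∀ i, Measurable (R i))
    (hindep : ProbabilityTheory.iIndepFun R P)
    (hdist : ∀ i, Measure.map (R i) P = ν)
    (b : ℕ → ℝ) (hbpos : ∀ n : ℕ, 1 ≤ n → 0 < b n)
    (hblim : Tendsto (fun n : ℕ => b n / Real.sqrt (2 * Real.log n)) atTop (𝓝 1)) :
    ∀ᵐ ω ∂P, ∀ f : BoundedContinuousFunction ℝ≥0∞ ℝ,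
      Tendsto (fun n : ℕ => ∫ l, f l ∂((n : ℝ≥0∞)⁻¹ • ∑ i ∈ Finset.Icc 1 n,
          Measure.dirac (R i ω * ENNReal.ofReal (b n / b i))))
        atTop (𝓝 (∫ l, f l ∂ν)) :=
  stmt7_general P ν R hRmeas hindep hdist b hbpos hblim
end

section
/- For every d ≥ 1, α ∈ (0,2), every m ≥ 1, all pairwise distinct points t₁,…,t_m ∈ ℝ^d, and every x ∈ ℝ^m \ {0} with Σ_{i=1}^m x_i = 0, one has Σ_{i=1}^m Σ_{j=1}^m x_i x_j ‖t_i − t_j‖^α < 0. In other words, the matrix ( ‖t_i − t_j‖^α )_{1≤i,j≤m} is strictly conditionally negative definite. -/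
/-!
Write `α = 2β` with `0 < β < 1`. Rescaling `s` gives, for `r ≥ 0`,
`r ^ β * C = ∫₀^∞ (1 - exp (-r s)) s ^ (-1 - β) ds` with `C > 0`. Taking `r = ‖tᵢ - tⱼ‖²`
and using `∑ xᵢ = 0` to cancel the constant term,
`C ∑ xᵢ xⱼ ‖tᵢ - tⱼ‖ ^ α = -∫₀^∞ Q(s) s ^ (-1 - β) ds` with
`Q(s) = ∑ xᵢ xⱼ exp (-s ‖tᵢ - tⱼ‖²)`. Since the Gaussian is, up to a positive constant, the
Fourier transform of a Gaussian, `Q(s) = K ∫ exp (-‖v‖²/(4s)) |∑ xⱼ e^{i⟪tⱼ, v⟫}|² dv ≥ 0`;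
and since the points are distinct, `Q(s) → ∑ xᵢ² > 0` as `s → ∞`. So the integral is positive.
-/

open MeasureTheory Set Filter Topology Real
open scoped RealInnerProductSpace

lemma setIntegral_Ioi_pos_of_eventually_pos {f : ℝ → ℝ} {a : ℝ} (hf : IntegrableOn f (Ioi a))
    (hf_nonneg : ∀ s ∈ Ioi a, 0 ≤ f s) (hf_pos : ∀ᶠ s in atTop, 0 < f s) :
    0 < ∫ s in Ioi a, f s := by
  rw [setIntegral_pos_iff_support_of_nonneg_ae
    (ae_restrict_of_forall_mem measurableSet_Ioi hf_nonneg) hf]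
  obtain ⟨S, hS⟩ := hf_pos.exists_forall_of_atTop
  calc (0 : ENNReal) < volume (Ioi (max S a)) := by simp
    _ ≤ volume (Function.support f ∩ Ioi a) := measure_mono fun s hs =>
      ⟨(hS s (le_max_left S a |>.trans hs.le)).ne', (le_max_right S a).trans_lt hs⟩

section FractionalPower

variable {β : ℝ}

lemma integrableOn_one_sub_exp_mul_rpow (hβ0 : 0 < β) (hβ1 : β < 1) {r : ℝ} (hr : 0 ≤ r) :
    IntegrableOn (fun s => (1 - exp (-(r * s))) * s ^ (-1 - β)) (Ioi 0) := by
  have hmeas : AEStronglyMeasurable (fun s : ℝ => (1 - exp (-(r * s))) * s ^ (-1 - β))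
      (volume.restrict (Ioi 0)) :=
    (ContinuousOn.mul (by fun_prop) fun s hs =>
      (continuousAt_rpow_const s _ (Or.inl (ne_of_gt hs))).continuousWithinAt).aestronglyMeasurable
      measurableSet_Ioi
  have hexp : ∀ s, 0 ≤ s → 0 ≤ 1 - exp (-(r * s)) := fun s hs => by
    simpa using mul_nonneg hr hs
  rw [← Ioc_union_Ioi_eq_Ioi zero_le_one]
  refine IntegrableOn.union ?_ ?_
  · refine Integrable.mono' (g := fun s => r * s ^ (-β)) ?_ (hmeas.mono_set Ioc_subset_Ioi_self) ?_
    · exact (intervalIntegral.intervalIntegrable_rpow' (a := 0) (b := 1)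
        (by linarith : -1 < -β)).1.const_mul r
    · filter_upwards [ae_restrict_mem measurableSet_Ioc] with s hs
      have hlin : 1 - exp (-(r * s)) ≤ r * s := by linarith [add_one_le_exp (-(r * s))]
      rw [norm_of_nonneg (mul_nonneg (hexp s hs.1.le) (rpow_nonneg hs.1.le _))]
      calc (1 - exp (-(r * s))) * s ^ (-1 - β) ≤ r * s * s ^ (-1 - β) := by
            gcongr
            exact rpow_nonneg hs.1.le _
        _ = r * s ^ (-β) := by
            rw [mul_assoc, ← rpow_one_add' hs.1.le (by linarith)]; ring_nf
  · refine Integrable.mono' (g := fun s => s ^ (-1 - β)) ?_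
      (hmeas.mono_set (Ioi_subset_Ioi zero_le_one)) ?_
    · exact (integrableOn_Ioi_rpow_iff zero_lt_one).mpr (by linarith)
    · filter_upwards [ae_restrict_mem measurableSet_Ioi] with s hs
      have hs0 : (0 : ℝ) < s := zero_lt_one.trans hs
      rw [norm_of_nonneg (mul_nonneg (hexp s hs0.le) (rpow_nonneg hs0.le _))]
      exact mul_le_of_le_one_left (rpow_nonneg hs0.le _) (by linarith [exp_pos (-(r * s))])

lemma integral_one_sub_exp_mul_rpow (hβ : β ≠ 0) {r : ℝ} (hr : 0 ≤ r) :
    ∫ s in Ioi 0, (1 - exp (-(r * s))) * s ^ (-1 - β)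
      = r ^ β * ∫ s in Ioi 0, (1 - exp (-s)) * s ^ (-1 - β) := by
  rcases hr.eq_or_lt with rfl | hr
  · simp [zero_rpow hβ]
  have hsubst := integral_comp_mul_left_Ioi (fun s => (1 - exp (-s)) * s ^ (-1 - β)) 0 hr
  rw [mul_zero, smul_eq_mul] at hsubst
  have hscale : ∀ s ∈ Ioi (0 : ℝ), (1 - exp (-(r * s))) * (r * s) ^ (-1 - β)
      = r ^ (-1 - β) * ((1 - exp (-(r * s))) * s ^ (-1 - β)) := fun s hs => by
    rw [mul_rpow hr.le (le_of_lt hs)]; ring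
  rw [setIntegral_congr_fun measurableSet_Ioi hscale, integral_const_mul] at hsubst
  refine mul_left_cancel₀ (rpow_pos_of_pos hr (-1 - β)).ne' ?_
  rw [hsubst, ← mul_assoc, ← rpow_add hr, show -1 - β + β = -1 by ring, rpow_neg_one]

lemma integral_one_sub_exp_rpow_pos (hβ0 : 0 < β) (hβ1 : β < 1) :
    0 < ∫ s in Ioi 0, (1 - exp (-s)) * s ^ (-1 - β) := by
  refine setIntegral_Ioi_pos_of_eventually_pos
    (by simpa using integrableOn_one_sub_exp_mul_rpow hβ0 hβ1 zero_le_one)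
    (fun s hs => ?_) ((eventually_gt_atTop 0).mono fun s hs => ?_)
  · have : exp (-s) ≤ 1 := exp_le_one_iff.mpr (neg_nonpos.mpr (le_of_lt hs))
    exact mul_nonneg (by linarith) (rpow_nonneg (le_of_lt hs) _)
  · have : exp (-s) < 1 := exp_lt_one_iff.mpr (neg_lt_zero.mpr hs)
    exact mul_pos (by linarith) (rpow_pos_of_pos hs _)

end FractionalPower

section QuadraticForm

variable {ι : Type*} [Fintype ι] {x : ι → ℝ}

lemma sum_mul_one_sub_mul_eq_neg (hsum : ∑ i, x i = 0) (a : ι → ι → ℝ) (c : ℝ) :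
    ∑ i, ∑ j, x i * x j * ((1 - a i j) * c) = -((∑ i, ∑ j, x i * x j * a i j) * c) := by
  calc ∑ i, ∑ j, x i * x j * ((1 - a i j) * c)
      = ∑ i, ∑ j, (x i * x j * c - x i * x j * a i j * c) :=
        Finset.sum_congr rfl fun i _ => Finset.sum_congr rfl fun j _ => by ring
    _ = ∑ i, x i * (∑ j, x j) * c - (∑ i, ∑ j, x i * x j * a i j) * c := by
        simp only [Finset.sum_sub_distrib, Finset.sum_mul, Finset.mul_sum]
    _ = -((∑ i, ∑ j, x i * x j * a i j) * c) := by simp [hsum]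

variable {r : ι → ι → ℝ} {β : ℝ}

lemma integrableOn_sum_mul_exp_neg_mul_mul_rpow (hsum : ∑ i, x i = 0) (hr : ∀ i j, 0 ≤ r i j)
    (hβ0 : 0 < β) (hβ1 : β < 1) :
    IntegrableOn (fun s => (∑ i, ∑ j, x i * x j * exp (-(r i j * s))) * s ^ (-1 - β)) (Ioi 0) := by
  have hint : IntegrableOn
      (fun s => ∑ i, ∑ j, x i * x j * ((1 - exp (-(r i j * s))) * s ^ (-1 - β))) (Ioi 0) :=
    integrable_finsetSum _ fun i _ => integrable_finsetSum _ fun j _ =>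
      (integrableOn_one_sub_exp_mul_rpow hβ0 hβ1 (hr i j)).const_mul _
  refine IntegrableOn.congr_fun hint.neg (fun s _ => ?_) measurableSet_Ioi
  simp only [Pi.neg_apply, sum_mul_one_sub_mul_eq_neg hsum, neg_neg]

lemma sum_mul_rpow_mul_integral_eq_neg_integral (hsum : ∑ i, x i = 0) (hr : ∀ i j, 0 ≤ r i j)
    (hβ0 : 0 < β) (hβ1 : β < 1) :
    (∑ i, ∑ j, x i * x j * r i j ^ β) * ∫ s in Ioi 0, (1 - exp (-s)) * s ^ (-1 - β)
      = -∫ s in Ioi 0, (∑ i, ∑ j, x i * x j * exp (-(r i j * s))) * s ^ (-1 - β) := by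
  have hint : ∀ i j, IntegrableOn
      (fun s => x i * x j * ((1 - exp (-(r i j * s))) * s ^ (-1 - β))) (Ioi 0) := fun i j =>
    (integrableOn_one_sub_exp_mul_rpow hβ0 hβ1 (hr i j)).const_mul _
  simp_rw [← integral_neg, ← sum_mul_one_sub_mul_eq_neg hsum]
  rw [integral_finsetSum _ fun i _ => integrable_finsetSum _ fun j _ => hint i j, Finset.sum_mul]
  refine Finset.sum_congr rfl fun i _ => ?_
  rw [integral_finsetSum _ fun j _ => hint i j, Finset.sum_mul]
  refine Finset.sum_congr rfl fun j _ => ?_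
  rw [integral_const_mul, integral_one_sub_exp_mul_rpow hβ0.ne' (hr i j), mul_assoc]

end QuadraticForm

lemma sum_mul_cos_sub_nonneg {ι : Type*} [Fintype ι] (a x : ι → ℝ) :
    0 ≤ ∑ i, ∑ j, x i * x j * cos (a i - a j) := by
  have hsq : ∑ i, ∑ j, x i * x j * cos (a i - a j)
      = (∑ i, x i * cos (a i)) ^ 2 + (∑ i, x i * sin (a i)) ^ 2 := by
    simp only [sq, Finset.sum_mul_sum, ← Finset.sum_add_distrib, cos_sub]
    exact Finset.sum_congr rfl fun i _ => Finset.sum_congr rfl fun j _ => by ring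
  rw [hsq]
  positivity

lemma tendsto_sum_mul_exp_neg_norm_sub_sq_mul_atTop {E ι : Type*} [NormedAddCommGroup E]
    [Fintype ι] {t : ι → E} (ht : Function.Injective t) (x : ι → ℝ) :
    Tendsto (fun s => ∑ i, ∑ j, x i * x j * exp (-(‖t i - t j‖ ^ 2 * s))) atTop
      (𝓝 (∑ i, x i ^ 2)) := by
  classical
  have hterm : ∀ i j, Tendsto (fun s => exp (-(‖t i - t j‖ ^ 2 * s))) atTop
      (𝓝 (if i = j then 1 else 0)) := by
    intro i j
    split_ifs with hij
    · simp [hij]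
    · have hpos : 0 < ‖t i - t j‖ ^ 2 := by
        have := sub_ne_zero.mpr (ht.ne hij)
        positivity
      exact tendsto_exp_neg_atTop_nhds_zero.comp (tendsto_id.const_mul_atTop hpos)
  convert tendsto_finsetSum Finset.univ fun i _ =>
    tendsto_finsetSum Finset.univ fun j _ => (hterm i j).const_mul (x i * x j) using 2 with i
  simp [sq]

section GaussianKernel

variable {V : Type*} [NormedAddCommGroup V] [InnerProductSpace ℝ V]

lemma re_cexp_neg_mul_sq_norm_add_I_mul_inner (b : ℝ) (w v : V) :
    (Complex.exp (-(b : ℂ) * ‖v‖ ^ 2 + Complex.I * ⟪w, v⟫)).re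
      = exp (-b * ‖v‖ ^ 2) * cos ⟪w, v⟫ := by
  rw [show -(b : ℂ) * ‖v‖ ^ 2 + Complex.I * ⟪w, v⟫
      = ((-b * ‖v‖ ^ 2 : ℝ) : ℂ) + ⟪w, v⟫ * Complex.I by push_cast; ring,
    Complex.exp_add, ← Complex.ofReal_exp, Complex.re_ofReal_mul, Complex.exp_ofReal_mul_I_re]

variable [FiniteDimensional ℝ V]

lemma integrable_exp_neg_mul_sq_norm_mul_cos_inner [MeasurableSpace V] [BorelSpace V]
    {b : ℝ} (hb : 0 < b) (w : V) :
    Integrable (fun v : V => exp (-b * ‖v‖ ^ 2) * cos ⟪w, v⟫) := by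
  simpa only [RCLike.re_to_complex, re_cexp_neg_mul_sq_norm_add_I_mul_inner] using
    (GaussianFourier.integrable_cexp_neg_mul_sq_norm_add (b := b) hb Complex.I w).re

lemma integral_exp_neg_mul_sq_norm_mul_cos_inner [MeasurableSpace V] [BorelSpace V]
    {b : ℝ} (hb : 0 < b) (w : V) :
    ∫ v : V, exp (-b * ‖v‖ ^ 2) * cos ⟪w, v⟫
      = (π / b) ^ (Module.finrank ℝ V / 2 : ℝ) * exp (-(‖w‖ ^ 2 / (4 * b))) := by
  simp_rw [← re_cexp_neg_mul_sq_norm_add_I_mul_inner, ← RCLike.re_to_complex]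
  rw [integral_re (GaussianFourier.integrable_cexp_neg_mul_sq_norm_add (b := b) hb Complex.I w),
    GaussianFourier.integral_cexp_neg_mul_sq_norm_add (b := b) hb Complex.I w]
  have hpow : (π / (b : ℂ)) ^ ((Module.finrank ℝ V : ℂ) / 2)
      = ((π / b) ^ (Module.finrank ℝ V / 2 : ℝ) : ℝ) := by
    rw [Complex.ofReal_cpow (by positivity)]
    push_cast
    rfl
  have hexp : Complex.exp (Complex.I ^ 2 * ‖w‖ ^ 2 / (4 * b))
      = (exp (-(‖w‖ ^ 2 / (4 * b))) : ℝ) := by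
    rw [Complex.I_sq]
    push_cast
    ring_nf
  rw [hpow, hexp, ← Complex.ofReal_mul, RCLike.re_to_complex, Complex.ofReal_re]

theorem sum_mul_exp_neg_norm_sub_sq_mul_nonneg {ι : Type*} [Fintype ι] (t : ι → V) (x : ι → ℝ)
    {s : ℝ} (hs : 0 < s) : 0 ≤ ∑ i, ∑ j, x i * x j * exp (-(‖t i - t j‖ ^ 2 * s)) := by
  borelize V
  set b : ℝ := (4 * s)⁻¹
  have hb : 0 < b := by positivity
  set K : ℝ := (π / b) ^ (Module.finrank ℝ V / 2 : ℝ)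
  have hK : 0 < K := by positivity
  have hgauss : ∀ w : V, exp (-(‖w‖ ^ 2 * s))
      = K⁻¹ * ∫ v : V, exp (-b * ‖v‖ ^ 2) * cos ⟪w, v⟫ := fun w => by
    rw [integral_exp_neg_mul_sq_norm_mul_cos_inner hb, inv_mul_cancel_left₀ hK.ne']
    congr 2
    simp only [b]
    field_simp
  have hint : ∀ i j,
      Integrable fun v : V => exp (-b * ‖v‖ ^ 2) * (x i * x j * cos ⟪t i - t j, v⟫) := fun i j => by
      simpa only [mul_left_comm] using
        (integrable_exp_neg_mul_sq_norm_mul_cos_inner hb (t i - t j)).const_mul (x i * x j)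
  have hrepr : ∑ i, ∑ j, x i * x j * exp (-(‖t i - t j‖ ^ 2 * s))
      = K⁻¹ * ∫ v : V, exp (-b * ‖v‖ ^ 2) * ∑ i, ∑ j, x i * x j * cos (⟪t i, v⟫ - ⟪t j, v⟫) := by
    simp_rw [hgauss, ← inner_sub_left, Finset.mul_sum]
    rw [integral_finsetSum _ fun i _ => integrable_finsetSum _ fun j _ => hint i j, Finset.mul_sum]
    refine Finset.sum_congr rfl fun i _ => ?_
    rw [integral_finsetSum _ fun j _ => hint i j, Finset.mul_sum]
    refine Finset.sum_congr rfl fun j _ => ?_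
    simp_rw [mul_left_comm (exp _), integral_const_mul]
    ring
  rw [hrepr]
  exact mul_nonneg (inv_nonneg.mpr hK.le) (integral_nonneg fun v =>
    mul_nonneg (exp_pos _).le (sum_mul_cos_sub_nonneg _ x))

end GaussianKernel

theorem sum_mul_norm_sub_rpow_neg {V ι : Type*} [NormedAddCommGroup V] [InnerProductSpace ℝ V]
    [FiniteDimensional ℝ V] [Fintype ι] {t : ι → V} (ht : Function.Injective t)
    {x : ι → ℝ} (hx : x ≠ 0) (hsum : ∑ i, x i = 0) {α : ℝ} (hα0 : 0 < α) (hα2 : α < 2) :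
    ∑ i, ∑ j, x i * x j * ‖t i - t j‖ ^ α < 0 := by
  obtain ⟨β, rfl⟩ : ∃ β, α = 2 * β := ⟨α / 2, by ring⟩
  have hβ0 : 0 < β := by linarith
  have hβ1 : β < 1 := by linarith
  have hr : ∀ i j, 0 ≤ ‖t i - t j‖ ^ 2 := fun i j => sq_nonneg _
  have hQ_lim : 0 < ∑ i, x i ^ 2 := by
    obtain ⟨i, hi⟩ := Function.ne_iff.mp hx
    exact Finset.sum_pos' (fun i _ => sq_nonneg (x i))
      ⟨i, Finset.mem_univ i, pow_two_pos_of_ne_zero hi⟩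
  have hpos : 0 < ∫ s in Ioi 0,
      (∑ i, ∑ j, x i * x j * exp (-(‖t i - t j‖ ^ 2 * s))) * s ^ (-1 - β) := by
    refine setIntegral_Ioi_pos_of_eventually_pos
      (integrableOn_sum_mul_exp_neg_mul_mul_rpow hsum hr hβ0 hβ1) (fun s hs => ?_) ?_
    · exact mul_nonneg (sum_mul_exp_neg_norm_sub_sq_mul_nonneg t x hs) (rpow_nonneg hs.le _)
    · filter_upwards [(tendsto_sum_mul_exp_neg_norm_sub_sq_mul_atTop ht x).eventually
        (lt_mem_nhds hQ_lim), eventually_gt_atTop 0] with s hQ hs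
      exact mul_pos hQ (rpow_pos_of_pos hs _)
  refine neg_of_mul_neg_left ?_ (integral_one_sub_exp_rpow_pos hβ0 hβ1).le
  simp_rw [rpow_mul (norm_nonneg _), rpow_two]
  rw [sum_mul_rpow_mul_integral_eq_neg_integral hsum hr hβ0 hβ1]
  linarith

theorem stmt12_general (d : ℕ) (α : ℝ) (hα : α ∈ Set.Ioo (0 : ℝ) 2)
    (m : ℕ) (t : Fin m → EuclideanSpace ℝ (Fin d))
    (ht : Function.Injective t)
    (x : Fin m → ℝ) (hx : x ≠ 0) (hsum : ∑ i, x i = 0) :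
    ∑ i, ∑ j, x i * x j * ‖t i - t j‖ ^ α < 0 :=
  sum_mul_norm_sub_rpow_neg ht hx hsum hα.1 hα.2

/-- The matrix `(‖t_i − t_j‖^α)` built from pairwise distinct points of `ℝ^d` is strictly
conditionally negative definite. -/
theorem stmt12 (d : ℕ) (hd : 1 ≤ d) (α : ℝ) (hα : α ∈ Set.Ioo (0 : ℝ) 2)
    (m : ℕ) (hm : 1 ≤ m) (t : Fin m → EuclideanSpace ℝ (Fin d))
    (ht : Function.Injective t)
    (x : Fin m → ℝ) (hx : x ≠ 0) (hsum : ∑ i, x i = 0) :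
    ∑ i, ∑ j, x i * x j * ‖t i - t j‖ ^ α < 0 :=
  stmt12_general d α hα m t ht x hx hsum
end

section
/- Let q ≥ 1, let V be an ℝ^q-valued random variable and (V_i)_{i∈ℕ} a sequence of i.i.d. copies of V, and let (ε_{i,n})_{n∈ℕ, 1≤i≤n} be ℝ^q-valued random variables on the same probability space such that for every N > 0, almost surely max{ ‖ε_{i,n}‖ : 1 ≤ i ≤ n, ‖V_i‖ ≤ N } → 0 as n → ∞. Then for every bounded continuous function f : ℝ^q → ℝ, almost surely (1/n) Σ_{i=1}^n f(V_i + ε_{i,n}) → E[f(V)] as n → ∞. -/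
open MeasureTheory Filter Topology ProbabilityTheory Finset
open scoped BoundedContinuousFunction

/-! Subtracting the unperturbed means, which converge by the strong law of large numbers,
leaves the average of `f (V_i + ε_{n,i}) - f V_i`. Fix a radius `R`. Since `f` is uniformly
continuous around the compact ball of radius `R` and the perturbations of the points in that ball
are eventually uniformly small, the terms with `‖V_i‖ ≤ R` are eventually at most `η`; the other
terms are at most `2 ‖f‖`, and by the strong law again their frequency tends to
`P (‖V‖ > R)`, which is small for `R` large. Only the countably many radii `m + 1` are needed, so
all these strong laws hold simultaneously almost surely. -/

theorem Finset.sum_Icc_one_eq_sum_range {M : Type*} [AddCommMonoid M] (g : ℕ → M) (n : ℕ) :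
    ∑ i ∈ Icc 1 n, g i = ∑ i ∈ range n, g (i + 1) := by
  rw [range_eq_Ico, sum_Ico_add', zero_add, Ico_add_one_right_eq_Icc]

theorem strong_law_ae_Icc {Ω E : Type*} [MeasurableSpace Ω] [MeasurableSpace E] {P : Measure Ω}
    {V : Ω → E} {Vs : ℕ → Ω → E} (hindep : iIndepFun Vs P)
    (hident : ∀ i, IdentDistrib (Vs i) V P P)
    {g : E → ℝ} (hg : Measurable g) (hint : Integrable g (P.map V)) :
    ∀ᵐ ω ∂P, Tendsto (fun n : ℕ => (n : ℝ)⁻¹ * ∑ i ∈ Icc 1 n, g (Vs i ω))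
      atTop (𝓝 (∫ ω, g (V ω) ∂P)) := by
  have hgV : IdentDistrib (g ∘ Vs 1) (g ∘ V) P P := (hident 1).comp hg
  have hint₁ : Integrable (g ∘ Vs 1) P :=
    hgV.integrable_iff.2 <|
      (integrable_map_measure hg.aestronglyMeasurable (hident 0).aemeasurable_snd).1 hint
  have hlaw := strong_law_ae_real (fun i => g ∘ Vs (i + 1)) hint₁
    (fun i j hij => (hindep.indepFun (by simpa using hij)).comp hg hg)
    (fun i => ((hident (i + 1)).trans (hident 1).symm).comp hg)
  filter_upwards [hlaw] with ω hω
  rw [hgV.integral_eq] at hω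
  refine hω.congr fun n => ?_
  rw [div_eq_inv_mul, sum_Icc_one_eq_sum_range]
  rfl

theorem tendsto_integral_indicator_norm_gt {Ω E : Type*} [MeasurableSpace Ω] [NormedAddCommGroup E]
    [MeasurableSpace E] [OpensMeasurableSpace E] (P : Measure Ω) [IsFiniteMeasure P]
    {V : Ω → E} (hV : AEMeasurable V P) {R : ℕ → ℝ} (hR : Tendsto R atTop atTop) :
    Tendsto (fun m => ∫ ω, {y : E | R m < ‖y‖}.indicator (1 : E → ℝ) (V ω) ∂P) atTop (𝓝 0) := by
  have hmeas : ∀ m, Measurable ({y : E | R m < ‖y‖}.indicator (1 : E → ℝ)) := fun m =>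
    measurable_const.indicator (measurableSet_lt measurable_const measurable_norm)
  simpa using tendsto_integral_of_dominated_convergence (f := fun _ => 0) (fun _ => (1 : ℝ))
    (fun m => ((hmeas m).comp_aemeasurable hV).aestronglyMeasurable) (integrable_const 1)
    (fun m => ae_of_all _ fun ω => by
      simpa using norm_indicator_le_norm_self (1 : E → ℝ) (V ω))
    (ae_of_all _ fun ω => tendsto_const_nhds.congr' <|
      (hR.eventually_ge_atTop ‖V ω‖).mono fun m hm => by simp [hm.not_gt])

theorem abs_inv_mul_sum_Icc_le {a b : ℕ → ℝ} {c : ℝ} (hc : 0 ≤ c) (n : ℕ)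
    (h : ∀ i ∈ Icc 1 n, |a i| ≤ c + b i) :
    |(n : ℝ)⁻¹ * ∑ i ∈ Icc 1 n, a i| ≤ c + (n : ℝ)⁻¹ * ∑ i ∈ Icc 1 n, b i := by
  rcases n.eq_zero_or_pos with rfl | hn
  · simpa using hc
  calc |(n : ℝ)⁻¹ * ∑ i ∈ Icc 1 n, a i| = (n : ℝ)⁻¹ * |∑ i ∈ Icc 1 n, a i| := by
        rw [abs_mul, abs_inv, Nat.abs_cast]
    _ ≤ (n : ℝ)⁻¹ * ∑ i ∈ Icc 1 n, (c + b i) := by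
        gcongr
        exact (abs_sum_le_sum_abs _ _).trans (sum_le_sum h)
    _ = c + (n : ℝ)⁻¹ * ∑ i ∈ Icc 1 n, b i := by
        rw [sum_add_distrib, sum_const, Nat.card_Icc, add_tsub_cancel_right, nsmul_eq_mul,
          mul_add, inv_mul_cancel_left₀ (by positivity)]

section Deterministic

variable {E : Type*} [NormedAddCommGroup E] [ProperSpace E]

theorem BoundedContinuousFunction.exists_pos_abs_sub_le_indicator (f : E →ᵇ ℝ) (R : ℝ) {η : ℝ}
    (hη : 0 < η) : ∃ δ > 0, ∀ x e : E, (‖x‖ ≤ R → ‖e‖ < δ) →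
      |f (x + e) - f x| ≤ η + 2 * ‖f‖ * {y : E | R < ‖y‖}.indicator 1 x := by
  obtain ⟨δ, hδ, hunif⟩ := Metric.mem_uniformity_dist.1 <|
    (isCompact_closedBall (0 : E) R).uniformContinuousAt_of_continuousAt f
      (fun _ _ => f.continuous.continuousAt) (Metric.dist_mem_uniformity hη)
  refine ⟨δ, hδ, fun x e he => ?_⟩
  by_cases hx : ‖x‖ ≤ R
  · have hclose : dist (f x) (f (x + e)) < η :=
      hunif (by simpa [dist_eq_norm'] using he hx) (mem_closedBall_zero_iff.2 hx)
    rw [dist_comm, Real.dist_eq] at hclose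
    simp [hx.not_gt, hclose.le]
  · have hfar : |f (x + e) - f x| ≤ 2 * ‖f‖ := by
      simpa [Real.dist_eq] using f.dist_le_two_norm (x + e) x
    rw [Set.indicator_of_mem (show x ∈ {y : E | R < ‖y‖} from not_le.1 hx), Pi.one_apply, mul_one]
    linarith

theorem tendsto_inv_mul_sum_Icc_sub_of_tail (f : E →ᵇ ℝ) (x : ℕ → E) (e : ℕ → ℕ → E)
    {R p : ℕ → ℝ} (hp : Tendsto p atTop (𝓝 0))
    (htail : ∀ m, Tendsto
      (fun n : ℕ => (n : ℝ)⁻¹ * ∑ i ∈ Icc 1 n, {y : E | R m < ‖y‖}.indicator 1 (x i))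
      atTop (𝓝 (p m)))
    (he : ∀ m, ∀ δ : ℝ, 0 < δ → ∃ n₀ : ℕ, ∀ n ≥ n₀,
      ∀ i, 1 ≤ i → i ≤ n → ‖x i‖ ≤ R m → ‖e n i‖ < δ) :
    Tendsto (fun n : ℕ => (n : ℝ)⁻¹ * ∑ i ∈ Icc 1 n, (f (x i + e n i) - f (x i))) atTop (𝓝 0) := by
  refine Metric.tendsto_nhds.2 fun η hη => ?_
  obtain ⟨m, hm⟩ : ∃ m, η / 2 + 2 * ‖f‖ * p m < η :=
    ((tendsto_const_nhds.add (hp.const_mul (2 * ‖f‖))).eventually_lt_const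
      (by simpa using half_lt_self hη)).exists
  obtain ⟨δ, hδ, hclose⟩ := f.exists_pos_abs_sub_le_indicator (R m) (half_pos hη)
  obtain ⟨n₀, hn₀⟩ := he m δ hδ
  filter_upwards [(tendsto_const_nhds.add ((htail m).const_mul (2 * ‖f‖))).eventually_lt_const hm,
    eventually_ge_atTop n₀] with n hn hnn₀
  rw [Real.dist_0_eq_abs]
  refine lt_of_le_of_lt ?_ hn
  refine (abs_inv_mul_sum_Icc_le (half_pos hη).le n fun i hi =>
    hclose _ _ (hn₀ n hnn₀ i (mem_Icc.1 hi).1 (mem_Icc.1 hi).2)).trans_eq ?_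
  rw [← mul_sum, mul_left_comm]

end Deterministic

theorem stmt13_general (q : ℕ)
    {Ω : Type*} [MeasurableSpace Ω] (P : Measure Ω) [IsProbabilityMeasure P]
    (V : Ω → EuclideanSpace ℝ (Fin q)) (hV : Measurable V)
    (Vs : ℕ → Ω → EuclideanSpace ℝ (Fin q)) (hVsMeas : ∀ i, Measurable (Vs i))
    (hindep : ProbabilityTheory.iIndepFun Vs P)
    (hident : ∀ i, Measure.map (Vs i) P = Measure.map V P)
    (ε : ℕ → ℕ → Ω → EuclideanSpace ℝ (Fin q))
    (hε : ∀ N : ℝ, 0 < N → ∀ᵐ ω ∂P, ∀ δ : ℝ, 0 < δ → ∃ n₀ : ℕ, ∀ n ≥ n₀,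
        ∀ i, 1 ≤ i → i ≤ n → ‖Vs i ω‖ ≤ N → ‖ε n i ω‖ < δ)
    (f : BoundedContinuousFunction (EuclideanSpace ℝ (Fin q)) ℝ) :
    ∀ᵐ ω ∂P, Tendsto
      (fun n : ℕ => (n : ℝ)⁻¹ * ∑ i ∈ Finset.Icc 1 n, f (Vs i ω + ε n i ω))
      atTop (𝓝 (∫ ω, f (V ω) ∂P)) := by
  have hid : ∀ i, IdentDistrib (Vs i) V P P := fun i =>
    ⟨(hVsMeas i).aemeasurable, hV.aemeasurable, hident i⟩
  have hmean := strong_law_ae_Icc hindep hid f.continuous.measurable (f.integrable _)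
  have htail : ∀ᵐ ω ∂P, ∀ m : ℕ, Tendsto (fun n : ℕ => (n : ℝ)⁻¹ *
      ∑ i ∈ Icc 1 n, {y | (m + 1 : ℝ) < ‖y‖}.indicator 1 (Vs i ω))
      atTop (𝓝 (∫ ω, {y | (m + 1 : ℝ) < ‖y‖}.indicator 1 (V ω) ∂P)) :=
    ae_all_iff.2 fun m => strong_law_ae_Icc hindep hid
      (measurable_const.indicator (measurableSet_lt measurable_const measurable_norm))
      ((integrable_const 1).indicator (measurableSet_lt measurable_const measurable_norm))
  have hsmall := ae_all_iff.2 fun m : ℕ => hε (m + 1) m.cast_add_one_pos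
  filter_upwards [hmean, htail, hsmall] with ω hmean htail hsmall
  have hperturb := tendsto_inv_mul_sum_Icc_sub_of_tail f _ _ (tendsto_integral_indicator_norm_gt P
    hV.aemeasurable (tendsto_natCast_atTop_atTop.atTop_add tendsto_const_nhds)) htail hsmall
  rw [← zero_add (∫ ω, f (V ω) ∂P)]
  refine (hperturb.add hmean).congr fun n => ?_
  rw [← mul_add, ← sum_add_distrib]
  simp only [sub_add_cancel]

/-- Law of large numbers for triangular perturbations of i.i.d. vectors
(Lemma 1 of Engelke–Kabluchko–Schlather). -/
theorem stmt13 (q : ℕ) (hq : 1 ≤ q)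
    {Ω : Type*} [MeasurableSpace Ω] (P : Measure Ω) [IsProbabilityMeasure P]
    (V : Ω → EuclideanSpace ℝ (Fin q)) (hV : Measurable V)
    (Vs : ℕ → Ω → EuclideanSpace ℝ (Fin q)) (hVsMeas : ∀ i, Measurable (Vs i))
    (hindep : ProbabilityTheory.iIndepFun Vs P)
    (hident : ∀ i, Measure.map (Vs i) P = Measure.map V P)
    (ε : ℕ → ℕ → Ω → EuclideanSpace ℝ (Fin q))
    (hε : ∀ N : ℝ, 0 < N → ∀ᵐ ω ∂P, ∀ δ : ℝ, 0 < δ → ∃ n₀ : ℕ, ∀ n ≥ n₀,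
        ∀ i, 1 ≤ i → i ≤ n → ‖Vs i ω‖ ≤ N → ‖ε n i ω‖ < δ)
    (f : BoundedContinuousFunction (EuclideanSpace ℝ (Fin q)) ℝ) :
    ∀ᵐ ω ∂P, Tendsto
      (fun n : ℕ => (n : ℝ)⁻¹ * ∑ i ∈ Finset.Icc 1 n, f (Vs i ω + ε n i ω))
      atTop (𝓝 (∫ ω, f (V ω) ∂P)) :=
  stmt13_general q P V hV Vs hVsMeas hindep hident ε hε f
end

section
/- (Spectral representation of the bivariate Hüsler–Reiss distribution.) For every λ ∈ (0,∞) and all x, y ∈ ℝ, Φ(λ + (x−y)/(2λ)) e^{−y} + Φ(λ + (y−x)/(2λ)) e^{−x} = ∫_0^{π/2} max{ e^{−x} sin θ, e^{−y} cos θ } · [ φ(λ + log(tan θ)/(2λ)) / (2λ sin θ cos²θ) ] dθ. -/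
open MeasureTheory Filter Real Set

/-! The substitution `t = λ + log (tan θ) / (2λ)` turns the right-hand side into
`∫ max (e^{-x} φ(t - 2λ), e^{-y} φ(t)) dt`, because the exponential tilt `e^{2λt - 2λ²} φ(t)` is
`φ(t - 2λ)`. The two terms of the maximum cross exactly once, at `t = λ + (x - y)/(2λ)`;
splitting the integral there gives `e^{-y} Φ(λ + (x - y)/(2λ))` below that point and, by
translation and symmetry of `φ`, `e^{-x} Φ(λ + (y - x)/(2λ))` above it. -/

lemma stdPdf_pos (t : ℝ) : 0 < stdPdf t := by
  unfold stdPdf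
  positivity

lemma stdPdf_neg (t : ℝ) : stdPdf (-t) = stdPdf t := by
  simp [stdPdf]

lemma integrable_stdPdf : Integrable stdPdf := by
  convert (integrable_exp_neg_mul_sq (b := 1 / 2) (by norm_num)).const_mul (√(2 * π))⁻¹ using 2
  rw [stdPdf]
  ring_nf

lemma exp_mul_stdPdf (a t : ℝ) : exp (a * t - a ^ 2 / 2) * stdPdf t = stdPdf (t - a) := by
  unfold stdPdf
  rw [mul_left_comm, ← exp_add]
  ring_nf

lemma setIntegral_Ioi_stdPdf_sub (a c : ℝ) : ∫ t in Ioi c, stdPdf (t - a) = stdCdf (a - c) := by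
  have hshift := (measurePreserving_sub_right volume a).setIntegral_preimage_emb
    (measurableEmbedding_subRight a) stdPdf (Ioi (c - a))
  rw [preimage_sub_const_Ioi, sub_add_cancel] at hshift
  rw [hshift, stdCdf, ← neg_sub, ← integral_comp_neg_Iic]
  simp only [stdPdf_neg]

lemma mul_stdPdf_sub_le_iff {a : ℝ} (ha : 0 < a) (x y t : ℝ) :
    exp (-x) * stdPdf (t - a) ≤ exp (-y) * stdPdf t ↔ t ≤ a / 2 + (x - y) / a := by
  rw [← exp_mul_stdPdf, ← mul_assoc, ← exp_add, mul_le_mul_iff_left₀ (stdPdf_pos t), exp_le_exp,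
    show a / 2 + (x - y) / a = (a ^ 2 / 2 + x - y) / a by field_simp; ring, le_div_iff₀ ha]
  constructor <;> intro h <;> linarith

lemma integral_max_mul_stdPdf {a : ℝ} (ha : 0 < a) (x y : ℝ) :
    ∫ t, max (exp (-x) * stdPdf (t - a)) (exp (-y) * stdPdf t)
      = stdCdf (a / 2 + (x - y) / a) * exp (-y) + stdCdf (a / 2 + (y - x) / a) * exp (-x) := by
  set c := a / 2 + (x - y) / a
  have hint : Integrable fun t => max (exp (-x) * stdPdf (t - a)) (exp (-y) * stdPdf t) :=
    ((integrable_stdPdf.comp_sub_right a).const_mul _).sup (integrable_stdPdf.const_mul _)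
  have hle : ∫ t in Iic c, max (exp (-x) * stdPdf (t - a)) (exp (-y) * stdPdf t)
      = stdCdf c * exp (-y) := by
    rw [setIntegral_congr_fun measurableSet_Iic
      fun t ht => max_eq_right ((mul_stdPdf_sub_le_iff ha x y t).2 ht),
      integral_const_mul, stdCdf, mul_comm]
  have hgt : ∫ t in Ioi c, max (exp (-x) * stdPdf (t - a)) (exp (-y) * stdPdf t)
      = stdCdf (a / 2 + (y - x) / a) * exp (-x) := by
    rw [setIntegral_congr_fun measurableSet_Ioi
      fun t ht => max_eq_left (not_le.1 ((mul_stdPdf_sub_le_iff ha x y t).not.2 (not_le.2 ht))).le,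
      integral_const_mul, setIntegral_Ioi_stdPdf_sub, mul_comm]
    congr 2
    ring
  rw [← intervalIntegral.integral_Iic_add_Ioi hint.integrableOn hint.integrableOn, hle, hgt]

lemma sin_mul_cos_pos {θ : ℝ} (hθ : θ ∈ Ioo 0 (π / 2)) : 0 < sin θ * cos θ :=
  mul_pos (sin_pos_of_pos_of_lt_pi hθ.1 (by linarith [hθ.2, pi_pos]))
    (cos_pos_of_mem_Ioo ⟨by linarith [hθ.1, pi_pos], hθ.2⟩)

lemma hasDerivAt_log_tan {θ : ℝ} (hθ : θ ∈ Ioo 0 (π / 2)) :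
    HasDerivAt (fun θ => log (tan θ)) (1 / (sin θ * cos θ)) θ := by
  obtain ⟨hsin, hcos⟩ := mul_ne_zero_iff.1 (sin_mul_cos_pos hθ).ne'
  convert (hasDerivAt_tan hcos).log (tan_pos_of_pos_of_lt_pi_div_two hθ.1 hθ.2).ne' using 1
  rw [tan_eq_sin_div_cos]
  field_simp

lemma injOn_log_tan : InjOn (fun θ => log (tan θ)) (Ioo 0 (π / 2)) := by
  intro a ha b hb hab
  have htan := log_injOn_pos (tan_pos_of_pos_of_lt_pi_div_two ha.1 ha.2)
    (tan_pos_of_pos_of_lt_pi_div_two hb.1 hb.2) hab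
  exact injOn_tan ⟨by linarith [ha.1, pi_pos], ha.2⟩ ⟨by linarith [hb.1, pi_pos], hb.2⟩ htan

lemma image_log_tan : (fun θ => log (tan θ)) '' Ioo 0 (π / 2) = univ :=
  eq_univ_of_forall fun s => ⟨arctan (exp s),
    ⟨arctan_pos.2 (exp_pos s), arctan_lt_pi_div_two _⟩, by simp only [tan_arctan, log_exp]⟩

lemma integral_comp_log_tan (f : ℝ → ℝ) :
    ∫ θ in Ioo 0 (π / 2), f (log (tan θ)) / (sin θ * cos θ) = ∫ s, f s := by
  conv_rhs => rw [← setIntegral_univ, ← image_log_tan, integral_image_eq_integral_abs_deriv_smul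
    measurableSet_Ioo (fun θ hθ => (hasDerivAt_log_tan hθ).hasDerivWithinAt) injOn_log_tan]
  refine setIntegral_congr_fun measurableSet_Ioo fun θ hθ => ?_
  rw [smul_eq_mul, abs_of_pos (one_div_pos.2 (sin_mul_cos_pos hθ)), one_div_mul_eq_div]

lemma integral_max_exp_mul_stdPdf {a : ℝ} (ha : 0 < a) (x y : ℝ) :
    ∫ s, max (exp (-x) * exp s) (exp (-y)) * stdPdf (a / 2 + s / a) / a
      = ∫ t, max (exp (-x) * stdPdf (t - a)) (exp (-y) * stdPdf t) := by
  let F : ℝ → ℝ := fun s => max (exp (-x) * exp s) (exp (-y)) * stdPdf (a / 2 + s / a) / a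
  have hscale := Measure.integral_comp_mul_left (fun s => F (s - a ^ 2 / 2)) a
  rw [integral_sub_right_eq_self F, abs_of_pos (inv_pos.2 ha), smul_eq_mul,
    eq_inv_mul_iff_mul_eq₀ ha.ne'] at hscale
  rw [← hscale, ← integral_const_mul]
  congr 1 with t
  dsimp only [F]
  rw [show a / 2 + (a * t - a ^ 2 / 2) / a = t by field_simp; ring,
    max_mul_of_nonneg _ _ (stdPdf_pos t).le, mul_assoc, exp_mul_stdPdf]
  field_simp

/-- **Spectral representation of the bivariate Hüsler–Reiss distribution.** -/
theorem stmt16 (l : ℝ) (hl : 0 < l) (x y : ℝ) :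
    stdCdf (l + (x - y) / (2 * l)) * Real.exp (-y)
        + stdCdf (l + (y - x) / (2 * l)) * Real.exp (-x)
      = ∫ θ in Set.Ioo (0 : ℝ) (Real.pi / 2),
          max (Real.exp (-x) * Real.sin θ) (Real.exp (-y) * Real.cos θ)
            * (stdPdf (l + Real.log (Real.tan θ) / (2 * l))
                / (2 * l * Real.sin θ * Real.cos θ ^ 2)) := by
  have h2l : 0 < 2 * l := by positivity
  have hsplit := integral_max_mul_stdPdf h2l x y
  have hscale := integral_max_exp_mul_stdPdf h2l x y
  rw [mul_div_cancel_left₀ l two_ne_zero] at hsplit hscale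
  rw [← hsplit, ← hscale, ← integral_comp_log_tan]
  refine setIntegral_congr_fun measurableSet_Ioo fun θ hθ => ?_
  obtain ⟨hsin, hcos⟩ := mul_ne_zero_iff.1 (sin_mul_cos_pos hθ).ne'
  have hmax : max (exp (-x) * exp (log (tan θ))) (exp (-y))
      = max (exp (-x) * sin θ) (exp (-y) * cos θ) / cos θ := by
    rw [exp_log (tan_pos_of_pos_of_lt_pi_div_two hθ.1 hθ.2), tan_eq_sin_div_cos,
      ← max_div_div_right (cos_pos_of_mem_Ioo ⟨by linarith [hθ.1, pi_pos], hθ.2⟩).le]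
    field_simp
  rw [hmax]
  field_simp
end
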